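/- arXiv:2209.13010 — 5 statements merged into one kernel-verified Lean document; each statement's English description precedes it below -/
import Mathlib

section
/- Let p be a prime, e ≥ 0 and k ≥ 1 integers, and let r = gcd(k, e+1). Then σ_k(p^e) ≡ r·(p^{e+1}−1)/(p^r−1) (mod σ(p^e)). -/
/-!
Modulo `σ(p^e) = 1 + p + ⋯ + p^e` the residue of `p` satisfies `p^(e+1) = 1`, so `i ↦ p^i` is
periodic with period `n = e + 1`. For any `n`-periodic `f` and `g = gcd(k, n)`, the map
`i ↦ k i mod n` hits every multiple of `g` below `n` exactly `g` times, whence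
`∑_{i<n} f(k i) = g · ∑_{j<n/g} f(g j)`. For `f(i) = p^i` the left side is `σ_k(p^e)` and the
right side is `r · (1 + p^r + ⋯ + p^(e+1-r)) = r (p^(e+1) - 1)/(p^r - 1)`.
-/

open Finset Function ArithmeticFunction
open scoped ArithmeticFunction.sigma

namespace Function.Periodic

variable {M : Type*} [AddCommMonoid M] {f : ℕ → M} {n : ℕ}

theorem sum_range_mul (hf : Periodic f n) (c : ℕ) :
    ∑ i ∈ range (c * n), f i = c • ∑ i ∈ range n, f i := by
  induction c with
  | zero => simp
  | succ c ih =>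
    rw [Nat.succ_mul, sum_range_add, ih, succ_nsmul]
    congr 1
    refine sum_congr rfl fun i _ => ?_
    rw [add_comm]
    simpa using hf.nat_mul c i

theorem sum_range_comp_mul_of_coprime (hf : Periodic f n) {a : ℕ} (ha : a.Coprime n) :
    ∑ i ∈ range n, f (a * i) = ∑ i ∈ range n, f i := by
  have hmaps : Set.MapsTo (fun i => a * i % n) (range n) (range n) := fun i hi =>
    mem_range.2 (Nat.mod_lt _ (pos_of_ne_zero (by rintro rfl; simp at hi)))
  have hinj : Set.InjOn (fun i => a * i % n) (range n) := fun i hi j hj hij =>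
    (Nat.ModEq.cancel_left_of_coprime (Nat.coprime_comm.1 ha) hij).eq_of_lt_of_lt
      (mem_range.1 hi) (mem_range.1 hj)
  exact sum_nbij _ hmaps hinj (surjOn_of_injOn_of_card_le _ hmaps hinj le_rfl)
    fun i _ => (hf.map_mod_nat _).symm

theorem sum_range_comp_mul (hf : Periodic f n) (k : ℕ) :
    ∑ i ∈ range n, f (i * k) = k.gcd n • ∑ j ∈ range (n / k.gcd n), f (k.gcd n * j) := by
  set g := k.gcd n
  obtain hg | hg := (Nat.zero_le g).eq_or_lt
  · simp [← hg, (Nat.gcd_eq_zero_iff.1 hg.symm).2]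
  set n' := n / g
  set k' := k / g
  have hn : g * n' = n := Nat.mul_div_cancel' (Nat.gcd_dvd_right k n)
  have hk : g * k' = k := Nat.mul_div_cancel' (Nat.gcd_dvd_left k n)
  have hfk : Periodic (fun i => f (i * k)) n' := fun i => by
    have h : (i + n') * k = i * k + k' * n := by rw [← hn, ← hk]; ring
    simpa [h] using hf.nat_mul k' (i * k)
  have hfg : Periodic (fun j => f (g * j)) n' := fun j => by
    simpa [mul_add, hn] using hf (g * j)
  calc ∑ i ∈ range n, f (i * k) = g • ∑ i ∈ range n', f (i * k) := by
        rw [← hfk.sum_range_mul g, hn]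
    _ = g • ∑ i ∈ range n', f (g * (k' * i)) := by
        congr 1
        exact sum_congr rfl fun i _ => by rw [← hk]; ring_nf
    _ = g • ∑ j ∈ range n', f (g * j) := by
        rw [hfg.sum_range_comp_mul_of_coprime (Nat.coprime_div_gcd_div_gcd hg)]

end Function.Periodic

theorem pow_eq_one_of_geom_sum_eq_zero {R : Type*} [Ring R] {x : R} {m : ℕ}
    (h : ∑ i ∈ range m, x ^ i = 0) : x ^ m = 1 :=
  sub_eq_zero.1 (by rw [← geom_sum_mul, h, zero_mul])

theorem Nat.pow_sub_one_div_pow_sub_one {p r m : ℕ} (hp : 2 ≤ p) (hr : r ≠ 0) (hrm : r ∣ m) :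
    (p ^ m - 1) / (p ^ r - 1) = ∑ j ∈ range (m / r), p ^ (r * j) := by
  simp only [pow_mul]
  rw [Nat.geomSum_eq (hp.trans (Nat.le_self_pow hr p)), ← pow_mul, Nat.mul_div_cancel' hrm]

theorem sigma_k_pow_mod_general (p e k : ℕ) (hp : p.Prime)
    (r : ℕ) (hr : r = Nat.gcd k (e + 1)) :
    ArithmeticFunction.sigma k (p ^ e) ≡ r * ((p ^ (e + 1) - 1) / (p ^ r - 1)) [MOD ArithmeticFunction.sigma 1 (p ^ e)] := by
  have hr0 : r ≠ 0 := hr ▸ (Nat.gcd_pos_of_pos_right _ e.succ_pos).ne'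
  have hx : (p : ZMod (σ 1 (p ^ e))) ^ (e + 1) = 1 := by
    refine pow_eq_one_of_geom_sum_eq_zero ?_
    exact_mod_cast (ZMod.natCast_eq_zero_iff _ _).2 (sigma_one_apply_prime_pow hp).dvd
  have hperiodic : Periodic (fun i => (p : ZMod (σ 1 (p ^ e))) ^ i) (e + 1) := fun i => by
    simp only [pow_add, hx, mul_one]
  rw [← ZMod.natCast_eq_natCast_iff, sigma_apply_prime_pow (k := k) hp,
    Nat.pow_sub_one_div_pow_sub_one hp.two_le hr0 (hr ▸ Nat.gcd_dvd_right _ _)]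
  push_cast
  rw [hr, ← nsmul_eq_mul]
  exact hperiodic.sum_range_comp_mul k

theorem sigma_k_pow_mod (p e k : ℕ) (hp : p.Prime) (hk : 1 ≤ k)
    (r : ℕ) (hr : r = Nat.gcd k (e + 1)) :
    ArithmeticFunction.sigma k (p ^ e) ≡ r * ((p ^ (e + 1) - 1) / (p ^ r - 1)) [MOD ArithmeticFunction.sigma 1 (p ^ e)] :=
  sigma_k_pow_mod_general p e k hp r hr
end

section
/- Let p be a prime and e ≥ 0, k ≥ 1 integers with gcd(k, e+1) = 1. Then σ(p^e) divides σ_k(p^e). -/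
/-! Modulo `G = 1 + p + ⋯ + p^e` we have `p^(e+1) ≡ 1`, so `p^(ik) ≡ p^(ik mod (e+1))`; since `k` is
coprime to `e+1`, `i ↦ ik mod (e+1)` permutes `{0, …, e}`, hence `σ_k(p^e) = ∑ p^(ik) ≡ G ≡ 0`. -/

open Finset

theorem Nat.injOn_mul_mod_range {N k : ℕ} (h : k.Coprime N) :
    Set.InjOn (fun i => i * k % N) (range N : Set ℕ) := fun _ hi _ hj hij =>
  (Nat.ModEq.cancel_right_of_coprime (Nat.coprime_comm.mp h) hij).eq_of_lt_of_lt
    (mem_range.mp hi) (mem_range.mp hj)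

theorem Finset.sum_range_mul_mod_of_coprime {M : Type*} [AddCommMonoid M] (f : ℕ → M)
    {N k : ℕ} (h : k.Coprime N) :
    ∑ i ∈ range N, f (i * k % N) = ∑ i ∈ range N, f i := by
  have hmaps : Set.MapsTo (fun i => i * k % N) (range N) (range N) := fun i hi =>
    mem_range.mpr (Nat.mod_lt _ (pos_of_ne_zero (by rintro rfl; simp at hi)))
  exact sum_nbij _ hmaps (Nat.injOn_mul_mod_range h)
    (surjOn_of_injOn_of_card_le _ hmaps (Nat.injOn_mul_mod_range h) le_rfl) fun _ _ => rfl

theorem geom_sum_dvd_geom_sum_pow_of_coprime {R : Type*} [CommRing R] (x : R) {N k : ℕ}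
    (h : k.Coprime N) : ∑ i ∈ range N, x ^ i ∣ ∑ i ∈ range N, (x ^ k) ^ i := by
  rw [← Ideal.Quotient.eq_zero_iff_dvd]
  set y := Ideal.Quotient.mk (Ideal.span {∑ i ∈ range N, x ^ i}) x
  have hgeom : ∑ i ∈ range N, y ^ i = 0 := by
    simpa [y] using (Ideal.Quotient.eq_zero_iff_dvd _ (∑ i ∈ range N, x ^ i)).mpr dvd_rfl
  have hy : y ^ N = 1 := by
    rw [← sub_eq_zero, ← geom_sum_mul, hgeom, zero_mul]
  calc Ideal.Quotient.mk _ (∑ i ∈ range N, (x ^ k) ^ i)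
      = ∑ i ∈ range N, y ^ (i * k % N) := by
        simp only [map_sum, map_pow, ← pow_mul, mul_comm k, ← pow_eq_pow_mod _ hy]; rfl
    _ = 0 := by rw [sum_range_mul_mod_of_coprime (y ^ ·) h, hgeom]

theorem sigma_dvd_sigma_k_pow_general (p e k : ℕ) (hp : p.Prime)
    (h : Nat.gcd k (e + 1) = 1) :
    ArithmeticFunction.sigma 1 (p ^ e) ∣ ArithmeticFunction.sigma k (p ^ e) := by
  rw [ArithmeticFunction.sigma_one_apply_prime_pow hp, ArithmeticFunction.sigma_apply_prime_pow hp,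
    ← Int.natCast_dvd_natCast]
  push_cast
  simpa only [← pow_mul, mul_comm k] using geom_sum_dvd_geom_sum_pow_of_coprime (p : ℤ) h

theorem sigma_dvd_sigma_k_pow (p e k : ℕ) (hp : p.Prime) (hk : 1 ≤ k)
    (h : Nat.gcd k (e + 1) = 1) :
    ArithmeticFunction.sigma 1 (p ^ e) ∣ ArithmeticFunction.sigma k (p ^ e) :=
  sigma_dvd_sigma_k_pow_general p e k hp h
end

section
/- If m is a multiperfect number, i.e., m divides σ(m), and k ≥ 1 is an integer with gcd(k, τ(m)) = 1, then m divides σ_k(m). -/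
/-!
Modulo `A = σ₁(p^b) = 1 + p + ⋯ + p^b` we have `p^(b+1) ≡ 1`, so the exponents of
`σ_k(p^b) = ∑_{j ≤ b} p^(jk)` only matter modulo `b + 1`. When `k` is coprime to
`b + 1 = τ(p^b)`, `j ↦ jk` permutes the residues modulo `b + 1`, hence `σ_k(p^b) ≡ σ₁(p^b) ≡ 0`.
By multiplicativity `σ₁(n) ∣ σ_k(n)` whenever `gcd(k, τ(n)) = 1`, and `m ∣ σ₁(m)`.
-/

open Finset ArithmeticFunction
open scoped ArithmeticFunction.sigma

theorem Function.Periodic.sum_range_mul_of_coprime {M : Type*} [AddCommMonoid M] {f : ℕ → M}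
    {n k : ℕ} (hf : Function.Periodic f n) (hkn : k.Coprime n) :
    ∑ j ∈ range n, f (j * k) = ∑ j ∈ range n, f j := by
  rcases n.eq_zero_or_pos with rfl | hn
  · simp
  have hmaps : ∀ j ∈ range n, j * k % n ∈ range n := fun j _ => mem_range.2 (Nat.mod_lt _ hn)
  have hinj : Set.InjOn (fun j => j * k % n) (range n) := fun a ha b hb hab =>
    Nat.ModEq.eq_of_lt_of_lt (Nat.ModEq.cancel_right_of_coprime hkn.symm hab)
      (mem_range.1 ha) (mem_range.1 hb)
  calc ∑ j ∈ range n, f (j * k) = ∑ j ∈ range n, f (j * k % n) :=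
        sum_congr rfl fun j _ => (hf.map_mod_nat _).symm
    _ = ∑ j ∈ range n, f j :=
        sum_nbij (fun j => j * k % n) hmaps hinj
          (surjOn_of_injOn_of_card_le _ hmaps hinj le_rfl) fun _ _ => rfl

theorem geom_sum_pow_mul_eq_zero_of_coprime {R : Type*} [Ring R] {x : R} {n k : ℕ}
    (hx : ∑ j ∈ range n, x ^ j = 0) (hkn : k.Coprime n) :
    ∑ j ∈ range n, x ^ (j * k) = 0 := by
  have hpow : x ^ n = 1 := sub_eq_zero.1 (by rw [← geom_sum_mul, hx, zero_mul])
  have hper : Function.Periodic (x ^ ·) n := fun j => by simp only [pow_add, hpow, mul_one]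
  rw [hper.sum_range_mul_of_coprime hkn, hx]

namespace ArithmeticFunction

theorem sigma_one_prime_pow_dvd_sigma {p b k : ℕ} (hp : p.Prime) (hk : k.Coprime (b + 1)) :
    σ 1 (p ^ b) ∣ σ k (p ^ b) := by
  have hgeom : ∑ j ∈ range (b + 1), (p : ZMod (σ 1 (p ^ b))) ^ j = 0 := by
    simpa [sigma_one_apply_prime_pow hp] using ZMod.natCast_self (σ 1 (p ^ b))
  rw [sigma_apply_prime_pow (k := k) hp, ← ZMod.natCast_eq_zero_iff]
  push_cast
  exact geom_sum_pow_mul_eq_zero_of_coprime hgeom hk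

theorem sigma_one_dvd_sigma_of_coprime_sigma_zero {n k : ℕ} (hk : k.Coprime (σ 0 n)) :
    σ 1 n ∣ σ k n := by
  rcases eq_or_ne n 0 with rfl | hn
  · simp
  rw [isMultiplicative_sigma.multiplicative_factorization _ hn] at hk
  rw [isMultiplicative_sigma.multiplicative_factorization _ hn,
    isMultiplicative_sigma.multiplicative_factorization _ hn]
  refine prod_dvd_prod_of_dvd _ _ fun p hp => ?_
  have hprime : p.Prime := Nat.prime_of_mem_primeFactors hp
  have hdvd := dvd_prod_of_mem (fun p => σ 0 (p ^ n.factorization p)) hp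
  rw [sigma_zero_apply_prime_pow hprime] at hdvd
  exact sigma_one_prime_pow_dvd_sigma hprime (hk.coprime_dvd_right hdvd)

end ArithmeticFunction

theorem multiperfect_dvd_sigma_k_general (m k : ℕ) (hmp : m ∣ ArithmeticFunction.sigma 1 m)
    (h : Nat.gcd k (ArithmeticFunction.sigma 0 m) = 1) :
    m ∣ ArithmeticFunction.sigma k m :=
  hmp.trans (sigma_one_dvd_sigma_of_coprime_sigma_zero h)

theorem multiperfect_dvd_sigma_k (m k : ℕ) (hm : 0 < m) (hmp : m ∣ ArithmeticFunction.sigma 1 m)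
    (hk : 1 ≤ k) (h : Nat.gcd k (ArithmeticFunction.sigma 0 m) = 1) :
    m ∣ ArithmeticFunction.sigma k m :=
  multiperfect_dvd_sigma_k_general m k hmp h
end

section
/- If m is a multiperfect number (m divides σ(m)) whose number of divisors τ(m) is a power of 2, then m divides σ_k(m) for every odd integer k ≥ 1. -/
/-!
For a prime power, `σ_k(p^e) = ∑_{i < e+1} (p^k)^i`. When `e + 1 = 2^t` this geometric sum
factors as `∏_{s < t} (1 + (p^k)^(2^s))`, and for odd `k` each factor `1 + (p^(2^s))^k` is divisible
by `1 + p^(2^s)`. Hence `σ(p^e) ∣ σ_k(p^e)`. If `τ(m)` is a power of two, every `e + 1` with `e`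
an exponent of `m` divides it and is a power of two, so multiplicativity gives
`m ∣ σ(m) ∣ σ_k(m)`.
-/

open Finset ArithmeticFunction
open scoped ArithmeticFunction.sigma

theorem geom_sum_range_two_pow {R : Type*} [CommSemiring R] (x : R) (t : ℕ) :
    ∑ i ∈ range (2 ^ t), x ^ i = ∏ s ∈ range t, (1 + x ^ 2 ^ s) := by
  induction t with
  | zero => simp
  | succ t ih =>
    simp only [pow_succ 2 t, mul_two, sum_range_add, pow_add, ← mul_sum, prod_range_succ, ← ih]
    ring

theorem geom_sum_range_two_pow_dvd_of_odd (x t : ℕ) {k : ℕ} (hk : Odd k) :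
    ∑ i ∈ range (2 ^ t), x ^ i ∣ ∑ i ∈ range (2 ^ t), (x ^ k) ^ i := by
  rw [geom_sum_range_two_pow, geom_sum_range_two_pow]
  refine prod_dvd_prod_of_dvd _ _ fun s _ => ?_
  rw [← pow_mul, mul_comm, pow_mul, add_comm 1, add_comm 1]
  simpa using hk.nat_add_dvd_pow_add_pow (x ^ 2 ^ s) 1

theorem sigma_one_prime_pow_dvd_sigma {p e t k : ℕ} (hp : p.Prime) (he : e + 1 = 2 ^ t)
    (hk : Odd k) : σ 1 (p ^ e) ∣ σ k (p ^ e) := by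
  simp only [sigma_apply, Nat.sum_divisors_prime_pow hp, pow_one, he, pow_right_comm p _ k]
  exact geom_sum_range_two_pow_dvd_of_odd p t hk

theorem sigma_one_dvd_sigma_of_card_divisors_eq_two_pow {n j k : ℕ} (hn : σ 0 n = 2 ^ j)
    (hk : Odd k) : σ 1 n ∣ σ k n := by
  have hn0 : n ≠ 0 := by rintro rfl; simp at hn; exact pow_ne_zero j two_ne_zero hn.symm
  rw [isMultiplicative_sigma.multiplicative_factorization (σ 1) hn0,
    isMultiplicative_sigma.multiplicative_factorization (σ k) hn0, Finsupp.prod, Finsupp.prod]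
  refine prod_dvd_prod_of_dvd _ _ fun p hp => ?_
  have hp' : p ∈ n.primeFactors := by rwa [Nat.support_factorization] at hp
  have hdvd : n.factorization p + 1 ∣ 2 ^ j := by
    rw [← hn, sigma_zero_apply, Nat.card_divisors hn0]
    exact dvd_prod_of_mem _ hp'
  obtain ⟨t, -, ht⟩ := (Nat.dvd_prime_pow Nat.prime_two).mp hdvd
  exact sigma_one_prime_pow_dvd_sigma (Nat.prime_of_mem_primeFactors hp') ht hk

theorem multiperfect_dvd_sigma_odd_general (m : ℕ) (hmp : m ∣ ArithmeticFunction.sigma 1 m)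
    (j : ℕ) (hj : ArithmeticFunction.sigma 0 m = 2 ^ j) :
    ∀ k : ℕ, 1 ≤ k → Odd k → m ∣ ArithmeticFunction.sigma k m :=
  fun _ _ hk => hmp.trans (sigma_one_dvd_sigma_of_card_divisors_eq_two_pow hj hk)

theorem multiperfect_dvd_sigma_odd (m : ℕ) (hm : 0 < m) (hmp : m ∣ ArithmeticFunction.sigma 1 m)
    (j : ℕ) (hj : ArithmeticFunction.sigma 0 m = 2 ^ j) :
    ∀ k : ℕ, 1 ≤ k → Odd k → m ∣ ArithmeticFunction.sigma k m :=
  multiperfect_dvd_sigma_odd_general m hmp j hj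
end

section
/- If m > 1 is a squarefree integer such that m divides σ(m), then m = 6. -/
/-!
Write `P` for the set of prime factors of `m`, so that `m = ∏_{q ∈ P} q` and
`σ(m) = ∏_{q ∈ P} (q + 1)`. The largest `p ∈ P` divides `σ(m)`, hence some `q + 1` with
`q ∈ P`; since `q ≤ p` and `p ∤ p + 1`, this forces `q + 1 = p`. Two consecutive primes are
`2` and `3`, so `P = {2, 3}` and `m = 6`.
-/

open ArithmeticFunction Finset
open scoped ArithmeticFunction.sigma

theorem ArithmeticFunction.sigma_one_apply_prime {p : ℕ} (hp : p.Prime) : σ 1 p = p + 1 := by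
  simpa [add_comm] using sigma_one_apply_prime_pow (i := 1) hp

theorem ArithmeticFunction.sigma_one_apply_of_squarefree {n : ℕ} (hn : Squarefree n) :
    σ 1 n = ∏ p ∈ n.primeFactors, (p + 1) := by
  rw [← isMultiplicative_sigma.prod_primeFactors hn]
  exact prod_congr rfl fun p hp => sigma_one_apply_prime (Nat.prime_of_mem_primeFactors hp)

theorem Nat.Prime.eq_two_of_prime_add_one {q : ℕ} (hq : q.Prime) (hq1 : (q + 1).Prime) :
    q = 2 := by
  have := hq.two_le
  rcases hq.eq_two_or_odd, hq1.eq_two_or_odd with ⟨h | h, h1 | h1⟩ <;> omega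

theorem Nat.Prime.exists_add_one_eq_of_dvd_prod_add_one {p : ℕ} {s : Finset ℕ} (hp : p.Prime)
    (hle : ∀ q ∈ s, q ≤ p) (hdvd : p ∣ ∏ q ∈ s, (q + 1)) : ∃ q ∈ s, q + 1 = p := by
  obtain ⟨q, hqs, hpq⟩ := hp.prime.exists_mem_finset_dvd hdvd
  have hqp : q ≠ p := by
    rintro rfl
    exact hp.not_dvd_one ((Nat.dvd_add_right dvd_rfl).mp hpq)
  have hqlt : q < p := (hle q hqs).lt_of_ne hqp
  have hple : p ≤ q + 1 := Nat.le_of_dvd q.succ_pos hpq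
  exact ⟨q, hqs, by omega⟩

theorem squarefree_multiperfect_eq_six (m : ℕ) (hm : 1 < m) (hsf : Squarefree m)
    (h : m ∣ ArithmeticFunction.sigma 1 m) : m = 6 := by
  have hne : m.primeFactors.Nonempty := Nat.nonempty_primeFactors.mpr hm
  have hpm : m.primeFactors.max' hne ∈ m.primeFactors := max'_mem _ hne
  set p := m.primeFactors.max' hne
  have hp : p.Prime := Nat.prime_of_mem_primeFactors hpm
  have hdvd : p ∣ ∏ q ∈ m.primeFactors, (q + 1) :=
    (Nat.dvd_of_mem_primeFactors hpm).trans (sigma_one_apply_of_squarefree hsf ▸ h)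
  obtain ⟨q, hqm, hqp⟩ := hp.exists_add_one_eq_of_dvd_prod_add_one (le_max' _) hdvd
  have hq : q = 2 := (Nat.prime_of_mem_primeFactors hqm).eq_two_of_prime_add_one (hqp ▸ hp)
  subst hq
  have hP : m.primeFactors = {2, 3} := by
    refine Subset.antisymm (fun r hr => ?_) (by simp [insert_subset_iff, hqm, hqp ▸ hpm])
    have := (Nat.prime_of_mem_primeFactors hr).two_le
    have := le_max' _ r hr
    simp only [mem_insert, mem_singleton]
    omega
  rw [← Nat.prod_primeFactors_of_squarefree hsf, hP]
  rfl
end
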